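/- Let C be a TDD of width k respecting a vtree T over a finite variable set X, let x ∈ X and b ∈ {0,1}, and let τ_b ∈ 2^{{x}} be the assignment mapping x to b. Then there exists a TDD C' respecting the vtree T∖x, of size at most |C| and width at most k, computing the Boolean function f_C[τ_b] over X∖{x}. -/

import Mathlib

/-- A vtree: a rooted binary tree whose leaves are labeled by variables. -/
inductive Vtree (V : Type) where
  | leaf : V → Vtree V
  | node : Vtree V → Vtree V → Vtree V

namespace Vtree

variable {V : Type} [DecidableEq V]

/-- The set of variables labeling the leaves of a vtree. -/
def vars : Vtree V → Finset V
  | leaf x => {x}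
  | node l r => l.vars ∪ r.vars

/-- A vtree is proper when its leaves carry pairwise distinct variables,
so that the leaves are in one-to-one correspondence with `vars`. -/
def Proper : Vtree V → Prop
  | leaf _ => True
  | node l r => l.Proper ∧ r.Proper ∧ Disjoint l.vars r.vars

/-- `T.IsNode t` : `t` is (the subtree rooted at) a node of `T`. -/
def IsNode : Vtree V → Vtree V → Prop
  | leaf x, t => t = leaf x
  | node l r, t => t = node l r ∨ l.IsNode t ∨ r.IsNode t

/-- Remove every leaf whose variable is in `Y`, suppressing unary nodes.
Returns `none` if no leaf survives. -/
def restrict (Y : Finset V) : Vtree V → Option (Vtree V)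
  | leaf x => if x ∈ Y then none else some (leaf x)
  | node l r =>
    match l.restrict Y, r.restrict Y with
    | none, o => o
    | some l', none => some l'
    | some l', some r' => some (node l' r')

/-- The vtree `T ∖ x`. -/
def remove (x : V) (T : Vtree V) : Option (Vtree V) := T.restrict {x}

/-- A vtree is linear when every internal node has a leaf child. -/
def Linear : Vtree V → Prop
  | leaf _ => True
  | node l r => ((∃ x, l = leaf x) ∨ (∃ x, r = leaf x)) ∧ l.Linear ∧ r.Linear

/-- The variable order induced by a linear vtree. -/
def order : Vtree V → List V
  | leaf x => [x]
  | node (leaf x) r => x :: r.order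
  | node l (leaf x) => x :: l.order
  | node l r => l.order ++ r.order

end Vtree

/-- Labels of leaf-layer nodes of a TDD: the positive literal, the negative
literal, and the constants 1 and 0. -/
inductive TLab where
  | pos | neg | one | zero
deriving DecidableEq

/-- Disjunction of two leaf labels (used when contracting twin leaf nodes). -/
def TLab.lor : TLab → TLab → TLab
  | .zero, a => a
  | a, .zero => a
  | .one, _ => .one
  | _, .one => .one
  | .pos, .pos => .pos
  | .neg, .neg => .neg
  | .pos, .neg => .one
  | .neg, .pos => .one

/-- A (non-deterministic) tree decision diagram structured along a vtree:
one layer of nodes (identified by natural numbers) per vtree node; leaf-layer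
nodes carry labels, internal-layer nodes carry their sets of input pairs. -/
inductive NTDD (V : Type) where
  | leaf (x : V) (ns : Finset ℕ) (lab : ℕ → TLab)
  | node (l r : NTDD V) (ns : Finset ℕ) (E : ℕ → Finset (ℕ × ℕ))

namespace NTDD

variable {V : Type}

/-- The vtree that an nTDD is structured along. -/
def shape : NTDD V → Vtree V
  | leaf x _ _ => .leaf x
  | node l r _ _ => .node l.shape r.shape

/-- The set of nodes of the top (root) layer. -/
def nodes : NTDD V → Finset ℕ
  | leaf _ ns _ => ns
  | node _ _ ns _ => ns

/-- The size of an nTDD: the total number of input pairs. -/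
def size : NTDD V → ℕ
  | leaf _ _ _ => 0
  | node l r ns E => l.size + r.size + ∑ g ∈ ns, (E g).card

/-- The width of an nTDD: the maximal cardinality of a layer. -/
def width : NTDD V → ℕ
  | leaf _ ns _ => ns.card
  | node l r ns _ => max ns.card (max l.width r.width)

/-- `C.sat g τ` : (the restriction of) the assignment `τ` is a model of the
function `f_g` computed by the top-layer node `g` of `C`. -/
def sat : NTDD V → ℕ → (V → Bool) → Prop
  | leaf x _ lab, g, τ =>
    match lab g with
    | .pos => τ x = true
    | .neg => τ x = false
    | .one => True
    | .zero => False
  | node l r _ E, g, τ => ∃ p ∈ E g, l.sat p.1 τ ∧ r.sat p.2 τ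

/-- Well-formedness: input pairs of top-layer nodes reference nodes of the
children layers. -/
def WF : NTDD V → Prop
  | leaf _ _ _ => True
  | node l r ns E => l.WF ∧ r.WF ∧ ∀ g ∈ ns, ∀ p ∈ E g, p.1 ∈ l.nodes ∧ p.2 ∈ r.nodes

/-- Determinism, turning an nTDD into a TDD: at each leaf layer at most one
node labeled by each of `x`, `¬x`, `1`, and if a node is labeled `1` then all
other nodes are labeled `0`; at each internal layer every pair is the input of
at most one node. -/
def Det : NTDD V → Prop
  | leaf _ ns lab =>
      (∀ g ∈ ns, ∀ g' ∈ ns, lab g = TLab.pos → lab g' = TLab.pos → g = g') ∧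
      (∀ g ∈ ns, ∀ g' ∈ ns, lab g = TLab.neg → lab g' = TLab.neg → g = g') ∧
      (∀ g ∈ ns, ∀ g' ∈ ns, lab g = TLab.one → lab g' = TLab.one → g = g') ∧
      (∀ g ∈ ns, lab g = TLab.one → ∀ g' ∈ ns, g' ≠ g → lab g' = TLab.zero)
  | node l r ns E => l.Det ∧ r.Det ∧ ∀ g ∈ ns, ∀ g' ∈ ns, g ≠ g' → Disjoint (E g) (E g')

/-- `C.Subdiagram D` : `D` is the sub-diagram of `C` sitting at some node of
the underlying vtree (including `C` itself). -/
def Subdiagram : NTDD V → NTDD V → Prop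
  | leaf x ns lab, D => D = leaf x ns lab
  | node l r ns E, D => D = node l r ns E ∨ l.Subdiagram D ∨ r.Subdiagram D

/-- A TDD is full if, at every layer, every assignment is a model of some node
of that layer. -/
def Full (C : NTDD V) : Prop :=
  ∀ D : NTDD V, C.Subdiagram D → ∀ τ : V → Bool, ∃ g ∈ D.nodes, D.sat g τ

end NTDD

/-- A choice of one node id per vtree node, mirroring the vtree: the data of a
certificate. -/
inductive IdTree where
  | leaf (g : ℕ)
  | node (g : ℕ) (l r : IdTree)

/-- The id chosen at the root. -/
def IdTree.root : IdTree → ℕ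
  | .leaf g => g
  | .node g _ _ => g

namespace NTDD

variable {V : Type}

/-- `C.IsCert P τ` : the choice `P` of one node per layer is a certificate for
`τ` in `C` (except for the root condition `P.root = out`, stated separately):
at a leaf labeled `x` the chosen node is labeled `1` or by a literal satisfied
by `τ`, and at an internal node the chosen pair of children nodes is an input
of the chosen node. -/
def IsCert : NTDD V → IdTree → (V → Bool) → Prop
  | leaf x ns lab, IdTree.leaf g, τ =>
      g ∈ ns ∧ (lab g = TLab.one ∨ (lab g = TLab.pos ∧ τ x = true) ∨
        (lab g = TLab.neg ∧ τ x = false))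
  | node l r ns E, IdTree.node g pl pr, τ =>
      g ∈ ns ∧ (pl.root, pr.root) ∈ E g ∧ l.IsCert pl τ ∧ r.IsCert pr τ
  | _, _, _ => False

/-- `SubPair C P D Q` : `D` is the sub-diagram of `C` at some vtree node `t`,
and `Q` is the corresponding part of the certificate data `P` (so `Q.root` is
the node that `P` chooses at `t`). -/
def SubPair : NTDD V → IdTree → NTDD V → IdTree → Prop
  | leaf x ns lab, P, D, Q => D = leaf x ns lab ∧ Q = P
  | node l r ns E, P, D, Q =>
      (D = node l r ns E ∧ Q = P) ∨
      (match P with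
       | IdTree.node _ pl pr => l.SubPair pl D Q ∨ r.SubPair pr D Q
       | _ => False)

/-- Contract the two top-layer nodes `g1, g1'` into the fresh node `v`. -/
def contractLayer (g1 g1' v : ℕ) : NTDD V → NTDD V
  | leaf x ns lab =>
      leaf x (insert v ((ns.erase g1).erase g1'))
        (fun g => if g = v then (lab g1).lor (lab g1') else lab g)
  | node l r ns E =>
      node l r (insert v ((ns.erase g1).erase g1'))
        (fun g => if g = v then E g1 ∪ E g1' else E g)

/-- Twin contraction of nodes `g1, g1'` of the left child layer into `v`:
they are merged in the left layer, and every input pair `(g1, g2)` or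
`(g1', g2)` of a top-layer node is replaced by `(v, g2)`. -/
def contractAtL (g1 g1' v : ℕ) : NTDD V → NTDD V
  | node l r ns E =>
      node (l.contractLayer g1 g1' v) r ns
        (fun g => (E g).image (fun p => if p.1 = g1 ∨ p.1 = g1' then (v, p.2) else p))
  | C => C

/-- Twin contraction of nodes `g1, g1'` of the right child layer into `v`. -/
def contractAtR (g1 g1' v : ℕ) : NTDD V → NTDD V
  | node l r ns E =>
      node l (r.contractLayer g1 g1' v) ns
        (fun g => (E g).image (fun p => if p.2 = g1 ∨ p.2 = g1' then (p.1, v) else p))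
  | C => C

open Classical in
/-- Replace the sub-diagram `D` of `C` by `D'` (in a proper vtree, sub-diagrams
at distinct positions are distinct, so this is unambiguous). -/
noncomputable def replace : NTDD V → NTDD V → NTDD V → NTDD V
  | leaf x ns lab, D, D' => if leaf x ns lab = D then D' else leaf x ns lab
  | node l r ns E, D, D' =>
      if node l r ns E = D then D'
      else node (l.replace D D') (r.replace D D') ns E

/-- `g1` and `g1'` are twins of the left child layer: they have the same
siblings with respect to every top-layer node. -/
def TwinsL (g1 g1' : ℕ) : NTDD V → Prop
  | node l _ ns E => g1 ∈ l.nodes ∧ g1' ∈ l.nodes ∧ g1 ≠ g1' ∧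
      ∀ g ∈ ns, ∀ g2 : ℕ, ((g1, g2) ∈ E g ↔ (g1', g2) ∈ E g)
  | _ => False

/-- `g1` and `g1'` are twins of the right child layer. -/
def TwinsR (g1 g1' : ℕ) : NTDD V → Prop
  | node _ r ns E => g1 ∈ r.nodes ∧ g1' ∈ r.nodes ∧ g1 ≠ g1' ∧
      ∀ g ∈ ns, ∀ g2 : ℕ, ((g2, g1) ∈ E g ↔ (g2, g1') ∈ E g)
  | _ => False

/-- The node set of the left child layer. -/
def leftNodes : NTDD V → Finset ℕ
  | node l _ _ _ => l.nodes
  | _ => ∅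

/-- The node set of the right child layer. -/
def rightNodes : NTDD V → Finset ℕ
  | node _ r _ _ => r.nodes
  | _ => ∅

end NTDD

/-- The number of distinct non-trivial `Y`-subfunctions of the Boolean
function `f` : functions of the form `σ ↦ f (Y.piecewise τ σ)` for some
`τ`, having at least one model. -/
noncomputable def subCount {V : Type} [DecidableEq V] (f : (V → Bool) → Prop) (Y : Finset V) : ℕ :=
  Nat.card {h : (V → Bool) → Prop |
    (∃ τ : V → Bool, h = fun σ => f (Y.piecewise τ σ)) ∧ ∃ σ : V → Bool, h σ}

/-- The number of distinct `Y`-subfunctions of `f` (trivial ones included). -/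
noncomputable def subCountAll {V : Type} [DecidableEq V] (f : (V → Bool) → Prop) (Y : Finset V) : ℕ :=
  Nat.card {h : (V → Bool) → Prop |
    ∃ τ : V → Bool, h = fun σ => f (Y.piecewise τ σ)}

/-!
Conditioning on `x := b` only changes the layer of the parent `p` of the `x`-leaf. After
conditioning, a `p`-node `g` computes the disjunction of the functions `f_{g₂}` over the
inputs `(g₁, g₂)` of `g` whose leaf node `g₁` accepts `b`. So the layers at `p` and at the
`x`-leaf can be dropped, and the layer at the sibling `s` of the leaf replaced by one with the
nodes of `p`, where `g` collects the inputs of all `s`-nodes `g₂` selected for it. Determinism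
of the `x`-layer means at most one of its nodes accepts `b`, so distinct `p`-nodes select
disjoint sets of `s`-nodes; this keeps the new diagram deterministic and no larger than `C`.
-/

namespace TLab

def eval : TLab → Bool → Bool
  | .pos, v => v
  | .neg, v => !v
  | .one, _ => true
  | .zero, _ => false

instance : Std.Commutative TLab.lor := ⟨by intro u w; cases u <;> cases w <;> rfl⟩

instance : Std.Associative TLab.lor := ⟨by intro u w z; cases u <;> cases w <;> cases z <;> rfl⟩

theorem eval_lor (u w : TLab) (v : Bool) : (u.lor w).eval v = (u.eval v || w.eval v) := by
  cases u <;> cases w <;> cases v <;> rfl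

theorem eval_fold_lor {s : Finset ℕ} {f : ℕ → TLab} {v : Bool} :
    (s.fold TLab.lor .zero f).eval v = true ↔ ∃ a ∈ s, (f a).eval v = true := by
  classical
  induction s using Finset.induction with
  | empty => simp [eval]
  | insert a s ha ih => simp [Finset.fold_insert ha, eval_lor, ih]

end TLab

namespace Vtree

variable {V : Type} [DecidableEq V]

theorem eq_leaf_of_restrict_singleton_eq_none {x : V} :
    ∀ {T : Vtree V}, T.Proper → T.restrict {x} = none → T = leaf x
  | leaf y, _, h => by
    by_contra hne
    simp_all [restrict, eq_comm]
  | node l r, ⟨hl, hr, hdisj⟩, h => by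
    rcases hl' : l.restrict {x} with _ | l' <;> rcases hr' : r.restrict {x} with _ | r' <;>
      simp only [restrict, hl', hr', reduceCtorEq] at h
    rw [eq_leaf_of_restrict_singleton_eq_none hl hl',
      eq_leaf_of_restrict_singleton_eq_none hr hr'] at hdisj
    simp [vars] at hdisj

end Vtree

namespace NTDD

variable {V : Type}

theorem sat_leaf {x : V} {ns : Finset ℕ} {lab : ℕ → TLab} {g : ℕ} {τ : V → Bool} :
    (leaf x ns lab).sat g τ ↔ (lab g).eval (τ x) = true := by
  rcases h : lab g <;> simp [sat, h, TLab.eval]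

theorem det_leaf_iff {x : V} {ns : Finset ℕ} {lab : ℕ → TLab} :
    (leaf x ns lab).Det ↔
      ∀ v, ∀ g ∈ ns, ∀ g' ∈ ns,
        (lab g).eval v = true → (lab g').eval v = true → g = g' := by
  constructor
  · rintro ⟨hpos, hneg, hone, hzero⟩ v g hg g' hg' e e'
    by_contra hne
    rcases h : lab g <;> rcases h' : lab g' <;> cases v <;> simp [h, h', TLab.eval] at e e'
    all_goals first
      | exact hne (hpos g hg g' hg' h h')
      | exact hne (hneg g hg g' hg' h h')
      | exact hne (hone g hg g' hg' h h')
      | simp [hzero g hg h g' hg' (Ne.symm hne)] at h'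
      | simp [hzero g' hg' h' g hg hne] at h
  · intro h
    refine ⟨fun g hg g' hg' e e' => h true g hg g' hg' ?_ ?_,
      fun g hg g' hg' e e' => h false g hg g' hg' ?_ ?_,
      fun g hg g' hg' e e' => h true g hg g' hg' ?_ ?_, fun g hg e g' hg' hne => ?_⟩
    any_goals simp [TLab.eval, *]
    by_contra hnz
    obtain ⟨v, hv⟩ : ∃ v, (lab g').eval v = true := by
      rcases h' : lab g' <;> simp_all [TLab.eval]
    exact hne (h v g' hg' g hg hv (by simp [e, TLab.eval]))

def orLayer (ns : Finset ℕ) (S : ℕ → Finset ℕ) : NTDD V → NTDD V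
  | leaf x _ lab => leaf x ns fun g => (S g).fold TLab.lor .zero lab
  | node l r _ E => node l r ns fun g => (S g).biUnion E

section orLayer

variable {ns : Finset ℕ} {S : ℕ → Finset ℕ} (s : NTDD V)

@[simp]
theorem shape_orLayer : (s.orLayer ns S).shape = s.shape := by
  cases s <;> rfl

@[simp]
theorem nodes_orLayer : (s.orLayer ns S).nodes = ns := by
  cases s <;> rfl

theorem sat_orLayer (g : ℕ) (σ : V → Bool) :
    (s.orLayer ns S).sat g σ ↔ ∃ g' ∈ S g, s.sat g' σ := by
  cases s with
  | leaf x _ lab => simp [orLayer, sat_leaf, TLab.eval_fold_lor]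
  | node l r _ E =>
    simp only [orLayer, sat, Finset.mem_biUnion]
    constructor
    · rintro ⟨p, ⟨g', hg', hp⟩, hsat⟩
      exact ⟨g', hg', p, hp, hsat⟩
    · rintro ⟨g', hg', p, hp, hsat⟩
      exact ⟨p, ⟨g', hg', hp⟩, hsat⟩

variable {s}

theorem WF.orLayer (hs : s.WF) (hS : ∀ g ∈ ns, S g ⊆ s.nodes) : (s.orLayer ns S).WF := by
  cases s with
  | leaf => trivial
  | node l r _ E =>
    obtain ⟨hl, hr, hE⟩ := hs
    refine ⟨hl, hr, fun g hg p hp => ?_⟩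
    obtain ⟨g', hg', hp'⟩ := Finset.mem_biUnion.mp hp
    exact hE g' (hS g hg hg') p hp'

theorem Det.orLayer (hs : s.Det) (hS : ∀ g ∈ ns, S g ⊆ s.nodes)
    (hdisj : ∀ g ∈ ns, ∀ g' ∈ ns, g ≠ g' → Disjoint (S g) (S g')) :
    (s.orLayer ns S).Det := by
  cases s with
  | leaf x _ lab =>
    rw [NTDD.orLayer, det_leaf_iff]
    rw [det_leaf_iff] at hs
    intro v g hg g' hg' e e'
    obtain ⟨a, ha, ea⟩ := TLab.eval_fold_lor.mp e
    obtain ⟨a', ha', ea'⟩ := TLab.eval_fold_lor.mp e'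
    by_contra hne
    obtain rfl := hs v a (hS g hg ha) a' (hS g' hg' ha') ea ea'
    exact Finset.disjoint_left.mp (hdisj g hg g' hg' hne) ha ha'
  | node l r _ E =>
    obtain ⟨hl, hr, hE⟩ := hs
    refine ⟨hl, hr, fun g hg g' hg' hne => Finset.disjoint_left.mpr fun p hp hp' => ?_⟩
    obtain ⟨a, ha, hpa⟩ := Finset.mem_biUnion.mp hp
    obtain ⟨a', ha', hpa'⟩ := Finset.mem_biUnion.mp hp'
    by_cases haa : a = a'
    · subst haa
      exact Finset.disjoint_left.mp (hdisj g hg g' hg' hne) ha ha'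
    · exact Finset.disjoint_left.mp (hE a (hS g hg ha) a' (hS g' hg' ha') haa) hpa hpa'

theorem size_orLayer_le (hS : ∀ g ∈ ns, S g ⊆ s.nodes)
    (hdisj : ∀ g ∈ ns, ∀ g' ∈ ns, g ≠ g' → Disjoint (S g) (S g')) :
    (s.orLayer ns S).size ≤ s.size := by
  cases s with
  | leaf => exact le_rfl
  | node l r nr E =>
    have hsum : ∑ g ∈ ns, ((S g).biUnion E).card ≤ ∑ a ∈ nr, (E a).card :=
      calc ∑ g ∈ ns, ((S g).biUnion E).card
          ≤ ∑ g ∈ ns, ∑ a ∈ S g, (E a).card :=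
            Finset.sum_le_sum fun g _ => Finset.card_biUnion_le
        _ = ∑ a ∈ ns.biUnion S, (E a).card := (Finset.sum_biUnion hdisj).symm
        _ ≤ ∑ a ∈ nr, (E a).card :=
            Finset.sum_le_sum_of_subset (Finset.biUnion_subset.mpr hS)
    simp only [NTDD.orLayer, size]
    omega

theorem width_orLayer_le : (s.orLayer ns S).width ≤ max ns.card s.width := by
  cases s <;> simp only [orLayer, width] <;> omega

end orLayer

def selectedSnd (lab : ℕ → TLab) (b : Bool) (P : Finset (ℕ × ℕ)) : Finset ℕ :=
  (P.filter fun p => (lab p.1).eval b).image Prod.snd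

theorem mem_selectedSnd {lab : ℕ → TLab} {b : Bool} {P : Finset (ℕ × ℕ)} {g₂ : ℕ} :
    g₂ ∈ selectedSnd lab b P ↔ ∃ g₁, (g₁, g₂) ∈ P ∧ (lab g₁).eval b = true := by
  simp [selectedSnd]

theorem disjoint_selectedSnd {x : V} {nx : Finset ℕ} {lab : ℕ → TLab}
    (hx : (leaf x nx lab).Det) (b : Bool) {P Q : Finset (ℕ × ℕ)} (hP : ∀ p ∈ P, p.1 ∈ nx) (hQ : ∀ p ∈ Q, p.1 ∈ nx)
    (hPQ : Disjoint P Q) : Disjoint (selectedSnd lab b P) (selectedSnd lab b Q) := by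
  refine Finset.disjoint_left.mpr fun g₂ hP' hQ' => ?_
  obtain ⟨g₁, hp, e⟩ := mem_selectedSnd.mp hP'
  obtain ⟨g₁', hq, e'⟩ := mem_selectedSnd.mp hQ'
  obtain rfl := det_leaf_iff.mp hx b g₁ (hP _ hp) g₁' (hQ _ hq) e e'
  exact Finset.disjoint_left.mp hPQ hp hq

def mirror : NTDD V → NTDD V
  | node l r ns E => node r l ns fun g => (E g).image Prod.swap
  | C => C

section mirror

variable {C : NTDD V}

theorem sat_mirror (g : ℕ) (σ : V → Bool) : C.mirror.sat g σ ↔ C.sat g σ := by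
  cases C with
  | leaf => rfl
  | node l r ns E =>
    constructor
    · rintro ⟨p, hp, hr, hl⟩
      obtain ⟨q, hq, rfl⟩ := Finset.mem_image.mp hp
      exact ⟨q, hq, hl, hr⟩
    · rintro ⟨q, hq, hl, hr⟩
      exact ⟨q.swap, Finset.mem_image_of_mem _ hq, hr, hl⟩

theorem nodes_mirror : C.mirror.nodes = C.nodes := by
  cases C <;> rfl

theorem size_mirror : C.mirror.size = C.size := by
  cases C with
  | leaf => rfl
  | node l r ns E =>
    simp only [mirror, size, Finset.card_image_of_injective _ Prod.swap_injective]
    omega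

theorem width_mirror : C.mirror.width = C.width := by
  cases C with
  | leaf => rfl
  | node => simp only [mirror, width]; omega

theorem WF.mirror (hC : C.WF) : C.mirror.WF := by
  cases C with
  | leaf => trivial
  | node l r ns E =>
    obtain ⟨hl, hr, hE⟩ := hC
    refine ⟨hr, hl, fun g hg p hp => ?_⟩
    obtain ⟨q, hq, rfl⟩ := Finset.mem_image.mp hp
    exact (hE g hg q hq).symm

theorem Det.mirror (hC : C.Det) : C.mirror.Det := by
  cases C with
  | leaf => exact hC
  | node l r ns E =>
    obtain ⟨hl, hr, hE⟩ := hC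
    exact ⟨hr, hl, fun g hg g' hg' hne =>
      (Finset.disjoint_image Prod.swap_injective).mpr (hE g hg g' hg' hne)⟩

end mirror

variable [DecidableEq V]

structure IsConditioning (x : V) (b : Bool) (C C' : NTDD V) : Prop where
  wf : C'.WF
  det : C'.Det
  nodes_eq : C'.nodes = C.nodes
  size_le : C'.size ≤ C.size
  width_le : C'.width ≤ C.width
  sat_iff : ∀ g σ, C'.sat g σ ↔ C.sat g (Function.update σ x b)

namespace IsConditioning

variable {x : V} {b : Bool}

theorem of_mirror {C C' : NTDD V} (h : IsConditioning x b C.mirror C') :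
    IsConditioning x b C C' where
  wf := h.wf
  det := h.det
  nodes_eq := h.nodes_eq.trans nodes_mirror
  size_le := h.size_le.trans_eq size_mirror
  width_le := h.width_le.trans_eq width_mirror
  sat_iff g σ := (h.sat_iff g σ).trans (sat_mirror g _)

theorem node_congr {l r l' r' : NTDD V} {ns : Finset ℕ} {E : ℕ → Finset (ℕ × ℕ)}
    (hWF : (NTDD.node l r ns E).WF) (hDet : (NTDD.node l r ns E).Det)
    (hl : IsConditioning x b l l') (hr : IsConditioning x b r r') :
    IsConditioning x b (NTDD.node l r ns E) (NTDD.node l' r' ns E) where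
  wf := ⟨hl.wf, hr.wf, by simpa only [hl.nodes_eq, hr.nodes_eq] using hWF.2.2⟩
  det := ⟨hl.det, hr.det, hDet.2.2⟩
  nodes_eq := rfl
  size_le := by
    have := hl.size_le
    have := hr.size_le
    simp only [size]
    omega
  width_le := by
    have := hl.width_le
    have := hr.width_le
    simp only [width]
    omega
  sat_iff g σ := by simp only [sat, hl.sat_iff, hr.sat_iff]

theorem orLayer_of_leaf_child {nx : Finset ℕ} {lab : ℕ → TLab} {r r' : NTDD V}
    {ns : Finset ℕ} {E : ℕ → Finset (ℕ × ℕ)} (hWF : (NTDD.node (leaf x nx lab) r ns E).WF)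
    (hDet : (NTDD.node (leaf x nx lab) r ns E).Det) (hr : IsConditioning x b r r') :
    IsConditioning x b (NTDD.node (leaf x nx lab) r ns E)
      (r'.orLayer ns fun g => selectedSnd lab b (E g)) := by
  obtain ⟨-, -, hE⟩ := hWF
  obtain ⟨hx, -, hEdisj⟩ := hDet
  have hsub : ∀ g ∈ ns, selectedSnd lab b (E g) ⊆ r'.nodes := fun g hg g₂ hg₂ => by
    obtain ⟨g₁, hp, -⟩ := mem_selectedSnd.mp hg₂
    exact hr.nodes_eq ▸ (hE g hg _ hp).2
  have hdisj : ∀ g ∈ ns, ∀ g' ∈ ns, g ≠ g' →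
      Disjoint (selectedSnd lab b (E g)) (selectedSnd lab b (E g')) :=
    fun g hg g' hg' hne => disjoint_selectedSnd hx b (fun p hp => (hE g hg p hp).1)
      (fun p hp => (hE g' hg' p hp).1) (hEdisj g hg g' hg' hne)
  refine ⟨hr.wf.orLayer hsub, hr.det.orLayer hsub hdisj, nodes_orLayer _, ?_, ?_, ?_⟩
  · calc _ ≤ r'.size := size_orLayer_le hsub hdisj
      _ ≤ r.size := hr.size_le
      _ ≤ _ := by simp only [size]; omega
  · calc _ ≤ max ns.card r'.width := width_orLayer_le
      _ ≤ max ns.card r.width := max_le_max le_rfl hr.width_le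
      _ ≤ _ := by simp only [width]; omega
  · intro g σ
    show _ ↔ ∃ p ∈ E g, (leaf x nx lab).sat p.1 _ ∧ r.sat p.2 _
    simp only [sat_orLayer, mem_selectedSnd, hr.sat_iff, sat_leaf, Function.update_self]
    constructor
    · rintro ⟨g₂, ⟨g₁, hp, e⟩, hsat⟩
      exact ⟨(g₁, g₂), hp, e, hsat⟩
    · rintro ⟨⟨g₁, g₂⟩, hp, e, hsat⟩
      exact ⟨g₂, ⟨g₁, hp, e⟩, hsat⟩

end IsConditioning

theorem exists_isConditioning (x : V) (b : Bool) {C : NTDD V} (hp : C.shape.Proper)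
    (hWF : C.WF) (hDet : C.Det) {T' : Vtree V} (hT' : C.shape.restrict {x} = some T') :
    ∃ C', C'.shape = T' ∧ IsConditioning x b C C' := by
  induction C generalizing T' with
  | leaf y ns lab =>
    have hy : y ≠ x := by
      rintro rfl
      simp [shape, Vtree.restrict] at hT'
    simp only [shape, Vtree.restrict, Finset.mem_singleton, hy, if_false, Option.some.injEq]
      at hT'
    refine ⟨leaf y ns lab, hT', hWF, hDet, rfl, le_rfl, le_rfl, fun g σ => ?_⟩
    rw [sat_leaf, sat_leaf, Function.update_of_ne hy]
  | node l r ns E ihl ihr =>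
    obtain ⟨hpl, hpr, -⟩ := hp
    rcases hl : l.shape.restrict {x} with _ | l' <;> rcases hr : r.shape.restrict {x} with _ | r'
      <;> simp only [shape, Vtree.restrict, hl, hr, reduceCtorEq, Option.some.injEq] at hT'
    · have hlx := Vtree.eq_leaf_of_restrict_singleton_eq_none hpl hl
      cases l with
      | node => simp [shape] at hlx
      | leaf y nx lab =>
        obtain rfl : y = x := by simpa [shape] using hlx
        obtain ⟨C₂, rfl, h₂⟩ := ihr hpr hWF.2.1 hDet.2.1 hr
        exact ⟨_, hT' ▸ shape_orLayer _, h₂.orLayer_of_leaf_child hWF hDet⟩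
    · have hrx := Vtree.eq_leaf_of_restrict_singleton_eq_none hpr hr
      cases r with
      | node => simp [shape] at hrx
      | leaf y nx lab =>
        obtain rfl : y = x := by simpa [shape] using hrx
        obtain ⟨C₁, rfl, h₁⟩ := ihl hpl hWF.1 hDet.1 hl
        exact ⟨_, hT' ▸ shape_orLayer _,
          (h₁.orLayer_of_leaf_child hWF.mirror hDet.mirror).of_mirror⟩
    · obtain ⟨C₁, rfl, h₁⟩ := ihl hpl hWF.1 hDet.1 hl
      obtain ⟨C₂, rfl, h₂⟩ := ihr hpr hWF.2.1 hDet.2.1 hr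
      exact ⟨NTDD.node C₁ C₂ ns E, hT', h₁.node_congr hWF hDet h₂⟩

end NTDD

theorem stmt2_general {V : Type} [DecidableEq V] (T : Vtree V)
    (hTp : T.Proper)
    (C : NTDD V) (out : ℕ) (hsh : C.shape = T) (hWF : C.WF) (hDet : C.Det)
    (hout : out ∈ C.nodes) (k : ℕ) (hk : C.width = k)
    (x : V) (b : Bool)
    (T' : Vtree V) (hT' : T.remove x = some T') :
    ∃ (C' : NTDD V) (out' : ℕ),
      C'.shape = T' ∧ C'.WF ∧ C'.Det ∧ out' ∈ C'.nodes ∧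
      C'.size ≤ C.size ∧ C'.width ≤ k ∧
      ∀ σ : V → Bool, (C'.sat out' σ ↔ C.sat out (Function.update σ x b)) := by
  subst hsh hk
  obtain ⟨C', hshape, hC'⟩ := NTDD.exists_isConditioning x b hTp hWF hDet hT'
  exact ⟨C', out, hshape, hC'.wf, hC'.det, hC'.nodes_eq ▸ hout, hC'.size_le, hC'.width_le,
    hC'.sat_iff out⟩

/-- Conditioning: given a TDD `C` of width `k` respecting a
vtree `T` over `X`, a variable `x ∈ X` and a Boolean `b`, there is a TDD `C'`
respecting `T ∖ x`, of size at most `|C|` and width at most `k`, computing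
the Boolean function `f_C[x/b]` over `X ∖ {x}`. -/
theorem stmt2 {V : Type} [DecidableEq V] (X : Finset V) (T : Vtree V)
    (hTp : T.Proper) (hTX : T.vars = X)
    (C : NTDD V) (out : ℕ) (hsh : C.shape = T) (hWF : C.WF) (hDet : C.Det)
    (hout : out ∈ C.nodes) (k : ℕ) (hk : C.width = k)
    (x : V) (hx : x ∈ X) (b : Bool)
    (T' : Vtree V) (hT' : T.remove x = some T') :
    ∃ (C' : NTDD V) (out' : ℕ),
      C'.shape = T' ∧ C'.WF ∧ C'.Det ∧ out' ∈ C'.nodes ∧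
      C'.size ≤ C.size ∧ C'.width ≤ k ∧
      ∀ σ : V → Bool, (C'.sat out' σ ↔ C.sat out (Function.update σ x b)) :=
  stmt2_general T hTp C out hsh hWF hDet hout k hk x b T' hT'
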